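/- arXiv:2302.04269 — 4 statements merged into one kernel-verified Lean document; each statement's English description precedes it below -/
import Mathlib

section
/- Let g ∈ ℝ^d be a fixed vector. Suppose every image embedding x in the support of a distribution satisfies gᵀx = τ‖g‖² for a fixed scalar τ (i.e., g is orthogonal to the span of differences of image embeddings), and suppose E[Π_g(x)] = 0, where Π_g(x) = x - (gᵀx/‖g‖²)g is the projection onto the orthogonal complement of g. Let the balanced targets ẽ_c ∈ ℝ^C satisfy E_c[ẽ_c] = 0. Then for any λ > 0, any matrix W ∈ ℝ^{C×d} minimizing E_{x,c}[‖Wx - ẽ_c‖²] + λ‖W‖_F² satisfies Wg = 0. -/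
open Matrix

/-- Regularization forces the minimizer of the regularized quadratic loss to
annihilate the gap vector `g`, under the orthogonality and centering assumptions. -/
theorem gap_annihilation {d C n : ℕ}
    (p : Fin n → ℝ) (hp : ∀ i, 0 ≤ p i) (hp1 : ∑ i, p i = 1)
    (x : Fin n → Fin d → ℝ) (c : Fin n → Fin C)
    (g : Fin d → ℝ) (hg : g ≠ 0) (τ : ℝ)
    (horth : ∀ i, (∑ k, g k * x i k) = τ * (∑ k, g k * g k))
    (hcenter : ∑ i, p i • (x i - ((∑ k, g k * x i k) / (∑ k, g k * g k)) • g) = 0)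
    (ebal : Fin C → Fin C → ℝ)
    (hbal : ∑ i, p i • ebal (c i) = 0)
    (lam : ℝ) (hlam : 0 < lam)
    (W : Matrix (Fin C) (Fin d) ℝ)
    (hmin : ∀ W' : Matrix (Fin C) (Fin d) ℝ,
      (∑ i, p i * ∑ k, (W.mulVec (x i) k - ebal (c i) k) ^ 2)
        + lam * ∑ a, ∑ b, (W a b) ^ 2
      ≤ (∑ i, p i * ∑ k, (W'.mulVec (x i) k - ebal (c i) k) ^ 2)
        + lam * ∑ a, ∑ b, (W' a b) ^ 2) :
    W.mulVec g = 0 := by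
  classical
  set G : ℝ := ∑ k, g k * g k with hGdef
  obtain ⟨k0, hk0⟩ : ∃ k, g k ≠ 0 := by
    by_contra h; push_neg at h; exact hg (funext h)
  have hG : 0 < G := Finset.sum_pos' (fun k _ => mul_self_nonneg _)
    ⟨k0, Finset.mem_univ _, mul_self_pos.mpr hk0⟩
  have hGne : G ≠ 0 := ne_of_gt hG
  set v : Fin C → ℝ := W.mulVec g with hvdef
  set S : ℝ := ∑ a, (v a) ^ 2 with hSdef
  have hS0 : 0 ≤ S := Finset.sum_nonneg fun a _ => sq_nonneg _
  -- mean of x is τ • g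
  have hmean : ∀ k, ∑ i, p i * x i k = τ * g k := by
    intro k
    have h := congrFun hcenter k
    simp only [Finset.sum_apply, Pi.smul_apply, Pi.sub_apply, Pi.zero_apply,
      smul_eq_mul] at h
    have h2 : ∑ i, (p i * x i k - p i * (τ * g k)) = 0 := by
      rw [← h]
      apply Finset.sum_congr rfl
      intro i _
      rw [horth i]
      field_simp
    rw [Finset.sum_sub_distrib] at h2
    have h3 : ∑ i, p i * (τ * g k) = τ * g k := by
      rw [← Finset.sum_mul, hp1, one_mul]
    linarith [h2, h3]
  have hbalk : ∀ k, ∑ i, p i * ebal (c i) k = 0 := by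
    intro k
    have h := congrFun hbal k
    simpa using h
  -- Fact B : weighted mean of residuals
  have hB : ∀ k, ∑ i, p i * (W.mulVec (x i) k - ebal (c i) k) = τ * v k := by
    intro k
    have h1 : ∑ i, p i * W.mulVec (x i) k = τ * v k := by
      simp only [mulVec, dotProduct]
      calc ∑ i, p i * ∑ b, W k b * x i b
          = ∑ i, ∑ b, W k b * (p i * x i b) := by
            apply Finset.sum_congr rfl; intro i _
            rw [Finset.mul_sum]; apply Finset.sum_congr rfl; intro b _; ring
        _ = ∑ b, W k b * ∑ i, p i * x i b := by
            rw [Finset.sum_comm]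
            apply Finset.sum_congr rfl; intro b _
            rw [Finset.mul_sum]
        _ = ∑ b, W k b * (τ * g b) := by
            apply Finset.sum_congr rfl; intro b _; rw [hmean b]
        _ = τ * ∑ b, W k b * g b := by
            rw [Finset.mul_sum]; apply Finset.sum_congr rfl; intro b _; ring
    have h2 : ∑ i, (p i * W.mulVec (x i) k - p i * ebal (c i) k)
        = τ * v k := by
      rw [Finset.sum_sub_distrib, h1, hbalk k, sub_zero]
    rw [← h2]
    apply Finset.sum_congr rfl; intro i _; ring
  -- the perturbed matrix
  set W' : Matrix (Fin C) (Fin d) ℝ := fun a b => W a b - v a * g b / G with hW'def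
  have hA : ∀ i a, W'.mulVec (x i) a = W.mulVec (x i) a - τ * v a := by
    intro i a
    simp only [hW'def, mulVec, dotProduct]
    have : ∑ b, (W a b - v a * g b / G) * x i b
        = (∑ b, W a b * x i b) - (v a / G) * ∑ b, g b * x i b := by
      rw [Finset.mul_sum, ← Finset.sum_sub_distrib]
      apply Finset.sum_congr rfl; intro b _; ring
    rw [this, horth i]
    field_simp
  -- fit term identity
  have hfit : (∑ i, p i * ∑ k, (W'.mulVec (x i) k - ebal (c i) k) ^ 2)
      = (∑ i, p i * ∑ k, (W.mulVec (x i) k - ebal (c i) k) ^ 2) - τ ^ 2 * S := by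
    have step1 : ∀ i, (∑ k, (W'.mulVec (x i) k - ebal (c i) k) ^ 2)
        = (∑ k, (W.mulVec (x i) k - ebal (c i) k) ^ 2)
          - 2 * τ * (∑ k, v k * (W.mulVec (x i) k - ebal (c i) k))
          + τ ^ 2 * S := by
      intro i
      have hts : τ ^ 2 * S = ∑ k, τ ^ 2 * (v k) ^ 2 := by
        rw [hSdef, Finset.mul_sum]
      rw [hts, Finset.mul_sum, ← Finset.sum_sub_distrib, ← Finset.sum_add_distrib]
      apply Finset.sum_congr rfl; intro k _
      rw [hA i k]
      ring
    calc ∑ i, p i * ∑ k, (W'.mulVec (x i) k - ebal (c i) k) ^ 2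
        = ∑ i, (p i * (∑ k, (W.mulVec (x i) k - ebal (c i) k) ^ 2)
            - 2 * τ * (p i * (∑ k, v k * (W.mulVec (x i) k - ebal (c i) k)))
            + τ ^ 2 * S * p i) := by
          apply Finset.sum_congr rfl; intro i _
          rw [step1 i]; ring
      _ = (∑ i, p i * ∑ k, (W.mulVec (x i) k - ebal (c i) k) ^ 2)
            - 2 * τ * (∑ i, p i * (∑ k, v k * (W.mulVec (x i) k - ebal (c i) k)))
            + τ ^ 2 * S * (∑ i, p i) := by
          rw [Finset.sum_add_distrib, Finset.sum_sub_distrib, ← Finset.mul_sum,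
            ← Finset.mul_sum]
      _ = (∑ i, p i * ∑ k, (W.mulVec (x i) k - ebal (c i) k) ^ 2)
            - 2 * τ * (τ * S) + τ ^ 2 * S * 1 := by
          have hGsum : ∑ i, p i * (∑ k, v k * (W.mulVec (x i) k - ebal (c i) k))
              = τ * S :=
            calc ∑ i, p i * ∑ k, v k * (W.mulVec (x i) k - ebal (c i) k)
                = ∑ i, ∑ k, v k * (p i * (W.mulVec (x i) k - ebal (c i) k)) := by
                  apply Finset.sum_congr rfl; intro i _
                  rw [Finset.mul_sum]; apply Finset.sum_congr rfl; intro k _; ring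
              _ = ∑ k, v k * ∑ i, p i * (W.mulVec (x i) k - ebal (c i) k) := by
                  rw [Finset.sum_comm]
                  apply Finset.sum_congr rfl; intro k _
                  rw [Finset.mul_sum]
              _ = ∑ k, v k * (τ * v k) := by
                  apply Finset.sum_congr rfl; intro k _; rw [hB k]
              _ = τ * S := by
                  rw [hSdef, Finset.mul_sum]
                  apply Finset.sum_congr rfl; intro k _; ring
          rw [hGsum, hp1]
      _ = (∑ i, p i * ∑ k, (W.mulVec (x i) k - ebal (c i) k) ^ 2) - τ ^ 2 * S := by
          ring
  -- regularizer identity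
  have hreg : (∑ a, ∑ b, (W' a b) ^ 2) = (∑ a, ∑ b, (W a b) ^ 2) - S / G := by
    have step : ∀ a, (∑ b, (W' a b) ^ 2)
        = (∑ b, (W a b) ^ 2) - (v a) ^ 2 / G := by
      intro a
      have expand : ∀ b, (W' a b) ^ 2
          = (W a b) ^ 2 - (2 * v a / G) * (W a b * g b)
            + (v a / G) ^ 2 * (g b * g b) := by
        intro b
        simp only [hW'def]
        field_simp
        ring
      calc ∑ b, (W' a b) ^ 2
          = ∑ b, ((W a b) ^ 2 - (2 * v a / G) * (W a b * g b)
              + (v a / G) ^ 2 * (g b * g b)) := by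
            apply Finset.sum_congr rfl; intro b _; exact expand b
        _ = (∑ b, (W a b) ^ 2) - (2 * v a / G) * (∑ b, W a b * g b)
              + (v a / G) ^ 2 * G := by
            rw [Finset.sum_add_distrib, Finset.sum_sub_distrib, ← Finset.mul_sum,
              ← Finset.mul_sum, hGdef]
        _ = (∑ b, (W a b) ^ 2) - (2 * v a / G) * v a + (v a / G) ^ 2 * G := by
            congr 2
        _ = (∑ b, (W a b) ^ 2) - (v a) ^ 2 / G := by
            field_simp
            ring
    calc ∑ a, ∑ b, (W' a b) ^ 2
        = ∑ a, ((∑ b, (W a b) ^ 2) - (v a) ^ 2 / G) := by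
          apply Finset.sum_congr rfl; intro a _; exact step a
      _ = (∑ a, ∑ b, (W a b) ^ 2) - (∑ a, (v a) ^ 2) / G := by
          rw [Finset.sum_sub_distrib, Finset.sum_div]
      _ = (∑ a, ∑ b, (W a b) ^ 2) - S / G := by rw [hSdef]
  -- conclude
  have key := hmin W'
  rw [hfit, hreg, mul_sub] at key
  have h1 : τ ^ 2 * S + lam * (S / G) ≤ 0 := by linarith
  have h2 : 0 ≤ τ ^ 2 * S := mul_nonneg (sq_nonneg τ) hS0
  have h3 : 0 ≤ S / G := div_nonneg hS0 hG.le
  have h4 : lam * (S / G) ≤ 0 := by linarith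
  have h5 : S / G ≤ 0 := by
    by_contra hc
    push_neg at hc
    nlinarith
  have hSzero : S = 0 := by
    have : S / G = 0 := le_antisymm h5 h3
    field_simp at this
    simpa using this
  have hv : ∀ a ∈ Finset.univ, (v a) ^ 2 = 0 := by
    rw [← Finset.sum_eq_zero_iff_of_nonneg (fun a _ => sq_nonneg (v a))]
    exact hSzero
  funext a
  have := hv a (Finset.mem_univ a)
  have hva : v a = 0 := by
    exact pow_eq_zero_iff (n := 2) (by norm_num) |>.mp this
  simpa [hvdef] using hva
end

section
/- Under the same assumptions as above (gᵀx constant over image embeddings, E[Π_g(x)] = 0, E_c[ẽ_c] = 0), if additionally every paired text embedding y satisfies x - y = g, then any minimizer W of the regularized quadratic loss E_{x,c}[‖Wx - ẽ_c‖²] + λ‖W‖_F² (λ > 0) satisfies Wx = Wy for every image-text pair (x, y). Consequently W achieves the same quadratic loss on text embeddings as on image embeddings. -/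
open Matrix

/-- Cross-modal transferability (Proposition 1): any minimizer of the regularized
quadratic loss on image embeddings makes identical predictions on the paired text
embeddings, hence achieves the same quadratic loss on text embeddings. -/
theorem cross_modal_transferability {d C n : ℕ}
    (p : Fin n → ℝ) (hp : ∀ i, 0 ≤ p i) (hp1 : ∑ i, p i = 1)
    (x y : Fin n → Fin d → ℝ) (c : Fin n → Fin C)
    (g : Fin d → ℝ) (hg : g ≠ 0) (τ : ℝ)
    (hpair : ∀ i, x i - y i = g)
    (horth : ∀ i, (∑ k, g k * x i k) = τ * (∑ k, g k * g k))
    (hcenter : ∑ i, p i • (x i - ((∑ k, g k * x i k) / (∑ k, g k * g k)) • g) = 0)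
    (ebal : Fin C → Fin C → ℝ)
    (hbal : ∑ i, p i • ebal (c i) = 0)
    (lam : ℝ) (hlam : 0 < lam)
    (W : Matrix (Fin C) (Fin d) ℝ)
    (hmin : ∀ W' : Matrix (Fin C) (Fin d) ℝ,
      (∑ i, p i * ∑ k, (W.mulVec (x i) k - ebal (c i) k) ^ 2)
        + lam * ∑ a, ∑ b, (W a b) ^ 2
      ≤ (∑ i, p i * ∑ k, (W'.mulVec (x i) k - ebal (c i) k) ^ 2)
        + lam * ∑ a, ∑ b, (W' a b) ^ 2) :
    (∀ i, W.mulVec (x i) = W.mulVec (y i)) ∧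
    (∑ i, p i * ∑ k, (W.mulVec (y i) k - ebal (c i) k) ^ 2
      = ∑ i, p i * ∑ k, (W.mulVec (x i) k - ebal (c i) k) ^ 2) := by
  classical
  set G : ℝ := ∑ k, g k * g k with hGdef
  have hGpos : 0 < G := by
    rcases Function.ne_iff.mp hg with ⟨k0, hk0⟩
    have hk0' : (0:ℝ) < g k0 * g k0 := mul_self_pos.mpr hk0
    exact Finset.sum_pos' (fun k _ => mul_self_nonneg _) ⟨k0, Finset.mem_univ _, hk0'⟩
  have hGne : G ≠ 0 := ne_of_gt hGpos
  -- weighted mean of x is τ • g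
  have hx : ∀ b, ∑ i, p i * x i b = τ * g b := by
    intro b
    have h := congrFun hcenter b
    simp only [Finset.sum_apply, Pi.smul_apply, Pi.sub_apply, Pi.zero_apply,
      smul_eq_mul] at h
    have h2 : ∑ i, p i * (x i b - τ * g b) = 0 := by
      rw [← h]
      refine Finset.sum_congr rfl fun i _ => ?_
      rw [horth i, mul_div_assoc, div_self hGne, mul_one]
    have h3 : (∑ i, p i * x i b) - ∑ i, p i * (τ * g b) = 0 := by
      rw [← Finset.sum_sub_distrib]
      simpa [mul_sub] using h2
    have h4 : ∑ i, p i * (τ * g b) = τ * g b := by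
      rw [← Finset.sum_mul, hp1, one_mul]
    linarith
  -- balanced targets have mean zero, componentwise
  have hbal' : ∀ k, ∑ i, p i * ebal (c i) k = 0 := by
    intro k
    have h := congrFun hbal k
    simpa [Finset.sum_apply] using h
  -- mulVec as explicit sum
  have hWv : ∀ (v : Fin d → ℝ) (a : Fin C), W.mulVec v a = ∑ b, W a b * v b := by
    intro v a; rfl
  -- weighted mean of residuals
  have hr : ∀ k, ∑ i, p i * (W.mulVec (x i) k - ebal (c i) k) = τ * W.mulVec g k := by
    intro k
    have hA : ∑ i, p i * W.mulVec (x i) k = τ * W.mulVec g k := by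
      simp only [hWv]
      have swap : ∑ i, p i * ∑ b, W k b * x i b = ∑ b, W k b * ∑ i, p i * x i b := by
        simp only [Finset.mul_sum]
        rw [Finset.sum_comm]
        exact Finset.sum_congr rfl fun b _ => Finset.sum_congr rfl fun i _ => by ring
      rw [swap]
      rw [Finset.mul_sum]
      exact Finset.sum_congr rfl fun b _ => by rw [hx b]; ring
    have : ∑ i, p i * (W.mulVec (x i) k - ebal (c i) k)
        = (∑ i, p i * W.mulVec (x i) k) - ∑ i, p i * ebal (c i) k := by
      rw [← Finset.sum_sub_distrib]
      exact Finset.sum_congr rfl fun i _ => by ring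
    rw [this, hA, hbal' k, sub_zero]
  set S : ℝ := ∑ k, (W.mulVec g k) ^ 2 with hSdef
  have hSnn : 0 ≤ S := Finset.sum_nonneg fun k _ => sq_nonneg _
  -- the competitor
  set W' : Matrix (Fin C) (Fin d) ℝ :=
    Matrix.of (fun a b => W a b - W.mulVec g a * g b / G) with hW'def
  have hW'app : ∀ a b, W' a b = W a b - W.mulVec g a * g b / G := by
    intro a b; rfl
  have hW'x : ∀ i k, W'.mulVec (x i) k = W.mulVec (x i) k - τ * W.mulVec g k := by
    intro i k
    have e1 : W'.mulVec (x i) k = ∑ b, (W k b - W.mulVec g k * g b / G) * x i b := rfl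
    have e2 : ∑ b, (W k b - W.mulVec g k * g b / G) * x i b
        = (∑ b, W k b * x i b) - (W.mulVec g k / G) * ∑ b, g b * x i b := by
      rw [Finset.mul_sum, ← Finset.sum_sub_distrib]
      exact Finset.sum_congr rfl fun b _ => by ring
    rw [e1, e2, horth i, hWv (x i) k]
    field_simp
  -- data term identity
  have hM : ∑ i, p i * ∑ k, W.mulVec g k * (W.mulVec (x i) k - ebal (c i) k) = τ * S := by
    have swap : ∑ i, p i * ∑ k, W.mulVec g k * (W.mulVec (x i) k - ebal (c i) k)
        = ∑ k, W.mulVec g k * ∑ i, p i * (W.mulVec (x i) k - ebal (c i) k) := by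
      simp only [Finset.mul_sum]
      rw [Finset.sum_comm]
      exact Finset.sum_congr rfl fun k _ => Finset.sum_congr rfl fun i _ => by ring
    rw [swap]
    simp only [hr]
    rw [hSdef, Finset.mul_sum]
    exact Finset.sum_congr rfl fun k _ => by ring
  have hdata : ∑ i, p i * ∑ k, (W'.mulVec (x i) k - ebal (c i) k) ^ 2
      = (∑ i, p i * ∑ k, (W.mulVec (x i) k - ebal (c i) k) ^ 2) - τ ^ 2 * S := by
    have step1 : ∀ i, ∑ k, (W'.mulVec (x i) k - ebal (c i) k) ^ 2
        = (∑ k, (W.mulVec (x i) k - ebal (c i) k) ^ 2)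
          - 2 * τ * (∑ k, W.mulVec g k * (W.mulVec (x i) k - ebal (c i) k))
          + τ ^ 2 * S := by
      intro i
      rw [hSdef, Finset.mul_sum, Finset.mul_sum, ← Finset.sum_sub_distrib,
        ← Finset.sum_add_distrib]
      refine Finset.sum_congr rfl fun k _ => ?_
      rw [hW'x i k]; ring
    calc ∑ i, p i * ∑ k, (W'.mulVec (x i) k - ebal (c i) k) ^ 2
        = ∑ i, (p i * ∑ k, (W.mulVec (x i) k - ebal (c i) k) ^ 2
            - 2 * τ * (p i * ∑ k, W.mulVec g k * (W.mulVec (x i) k - ebal (c i) k))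
            + τ ^ 2 * S * p i) := by
          refine Finset.sum_congr rfl fun i _ => ?_
          rw [step1 i]; ring
      _ = (∑ i, p i * ∑ k, (W.mulVec (x i) k - ebal (c i) k) ^ 2)
            - 2 * τ * (∑ i, p i * ∑ k, W.mulVec g k * (W.mulVec (x i) k - ebal (c i) k))
            + τ ^ 2 * S * ∑ i, p i := by
          rw [Finset.sum_add_distrib, Finset.sum_sub_distrib, ← Finset.mul_sum,
            ← Finset.mul_sum]
      _ = (∑ i, p i * ∑ k, (W.mulVec (x i) k - ebal (c i) k) ^ 2) - τ ^ 2 * S := by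
          rw [hM, hp1]; ring
  -- regularizer identity
  have hreg : ∑ a, ∑ b, (W' a b) ^ 2 = (∑ a, ∑ b, (W a b) ^ 2) - S / G := by
    have per : ∀ a, ∑ b, (W' a b) ^ 2 = (∑ b, (W a b) ^ 2) - (W.mulVec g a) ^ 2 / G := by
      intro a
      have e1 : ∑ b, (W' a b) ^ 2
          = ∑ b, ((W a b) ^ 2 - 2 * (W.mulVec g a / G) * (W a b * g b)
              + (W.mulVec g a / G) ^ 2 * (g b * g b)) := by
        refine Finset.sum_congr rfl fun b _ => ?_
        rw [hW'app a b]; ring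
      rw [e1]
      rw [Finset.sum_add_distrib, Finset.sum_sub_distrib, ← Finset.mul_sum,
        ← Finset.mul_sum, ← hGdef]
      rw [← hWv g a]
      field_simp
      ring
    rw [Finset.sum_congr rfl fun a _ => per a, Finset.sum_sub_distrib, hSdef,
      Finset.sum_div]
  -- conclude S = 0 from minimality
  have hineq := hmin W'
  rw [hdata, hreg] at hineq
  have hSG : 0 ≤ S / G := div_nonneg hSnn hGpos.le
  have hS0 : S = 0 := by
    have h1 : 0 ≤ τ ^ 2 * S := mul_nonneg (sq_nonneg _) hSnn
    have h2 : lam * (S / G) ≤ 0 := by nlinarith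
    have h3 : S / G ≤ 0 := by
      by_contra hc
      push_neg at hc
      nlinarith
    have h4 : S ≤ 0 := by
      have := mul_le_mul_of_nonneg_right h3 hGpos.le
      rwa [div_mul_cancel₀ S hGne, zero_mul] at this
    linarith
  have hWg : W.mulVec g = 0 := by
    funext k
    have hsum : ∑ k, (W.mulVec g k) ^ 2 = 0 := by rw [← hSdef]; exact hS0
    have hterm := (Finset.sum_eq_zero_iff_of_nonneg
      (fun k _ => sq_nonneg (W.mulVec g k))).mp hsum k (Finset.mem_univ k)
    exact pow_eq_zero_iff (two_ne_zero) |>.mp hterm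
  have hpred : ∀ i, W.mulVec (x i) = W.mulVec (y i) := by
    intro i
    have hxi : x i = y i + g := by
      rw [← hpair i]; abel
    rw [hxi, Matrix.mulVec_add, hWg, add_zero]
  refine ⟨hpred, ?_⟩
  exact Finset.sum_congr rfl fun i _ => by rw [hpred i]
end

section
/- Suppose F ∈ ℝ^{N×d} and G ∈ ℝ^{M×d} satisfy P = F Gᵀ exactly, and suppose Pᵀ Y_x = (1/M) Y_z where Y_x ∈ ℝ^{N×C}, Y_z ∈ ℝ^{M×C} are the one-hot label matrices. Then the linear classifier with weight matrix W = M Fᵀ Y_x ∈ ℝ^{d×C}, applied to text embeddings, recovers the text labels exactly: G W = Y_z. -/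
open Matrix

/-- Cross-modal transferability of the class-mean classifier: if `P = F Gᵀ`
exactly and `Pᵀ Y_x = (1/M) Y_z`, then the linear head `W = M Fᵀ Y_x` applied
to text embeddings recovers the text labels: `G W = Y_z`. -/
theorem class_mean_classifier_transfer {N M C d : ℕ}
    (P : Matrix (Fin N) (Fin M) ℝ)
    (F : Matrix (Fin N) (Fin d) ℝ) (G : Matrix (Fin M) (Fin d) ℝ)
    (yx : Fin N → Fin C) (yz : Fin M → Fin C)
    (Yx : Matrix (Fin N) (Fin C) ℝ) (Yz : Matrix (Fin M) (Fin C) ℝ)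
    (hYx : Yx = Matrix.of fun i k => if k = yx i then (1 : ℝ) else 0)
    (hYz : Yz = Matrix.of fun j k => if k = yz j then (1 : ℝ) else 0)
    (hfact : P = F * Gᵀ)
    (hlabel : Pᵀ * Yx = (1 / (M : ℝ)) • Yz) :
    G * ((M : ℝ) • (Fᵀ * Yx)) = Yz := by
  rcases Nat.eq_zero_or_pos M with hM | hM
  · subst hM
    ext j k
    exact absurd j.2 (by simp)
  · have hM' : (M : ℝ) ≠ 0 := Nat.cast_ne_zero.mpr hM.ne'
    have h : G * (Fᵀ * Yx) = (F * Gᵀ)ᵀ * Yx := by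
      rw [Matrix.transpose_mul, Matrix.transpose_transpose, Matrix.mul_assoc]
    rw [Matrix.mul_smul, h, ← hfact, hlabel, smul_smul]
    field_simp
    exact one_smul _ _
end

section
/- Let P ∈ ℝ^{N×M} with all row sums equal to 1/M per column and all entries nonnegative (i.e., for each j, Σ_i p_{ij} = 1/M), and suppose p_{ij} > 0 implies y_{x_i} = y_{z_j}, where labels take values in [C]. If the factorization P = FGᵀ holds and every class c appears among the image labels, then every row of G (M Fᵀ Y_x) is a one-hot vector, namely the c-th standard basis vector where c = y_{z_j} for row j. -/
open Matrix

/-- Under exact factorization of the label-consistent connection matrix with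
uniform text marginals, the class-mean linear head perfectly classifies text
embeddings: every row of `G (M Fᵀ Y_x)` is the one-hot vector of the text label. -/
theorem class_mean_head_one_hot {N M C d : ℕ}
    (P : Matrix (Fin N) (Fin M) ℝ)
    (yx : Fin N → Fin C) (yz : Fin M → Fin C)
    (hpos : ∀ i j, 0 ≤ P i j)
    (hcol : ∀ j, ∑ i, P i j = 1 / (M : ℝ))
    (hsupp : ∀ i j, 0 < P i j → yx i = yz j)
    (F : Matrix (Fin N) (Fin d) ℝ) (G : Matrix (Fin M) (Fin d) ℝ)
    (hfact : P = F * Gᵀ)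
    (hclasses : ∀ cc : Fin C, ∃ i, yx i = cc) :
    ∀ j k,
      (G * ((M : ℝ) • (Fᵀ * Matrix.of fun i k' => if k' = yx i then (1 : ℝ) else 0))) j k
        = if k = yz j then 1 else 0 := by
  intro j k
  have hM : (M : ℝ) ≠ 0 := Nat.cast_ne_zero.mpr (Nat.pos_of_ne_zero (by
    rintro rfl; exact j.elim0)).ne'
  have hP : ∀ i, P i j = ∑ l, F i l * G j l := by
    intro i
    simp [hfact, Matrix.mul_apply, Matrix.transpose_apply]
  have key : ∑ i, P i j * (if k = yx i then (1:ℝ) else 0)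
      = if k = yz j then 1 / (M : ℝ) else 0 := by
    by_cases hk : k = yz j
    · simp only [hk, if_true]
      rw [← hcol j]
      apply Finset.sum_congr rfl
      intro i _
      rcases lt_or_eq_of_le (hpos i j) with h | h
      · rw [if_pos (by rw [hsupp i j h]), mul_one]
      · rw [← h, zero_mul]
    · simp only [hk, if_false]
      apply Finset.sum_eq_zero
      intro i _
      rcases lt_or_eq_of_le (hpos i j) with h | h
      · rw [if_neg (by rw [hsupp i j h]; exact hk), mul_zero]
      · rw [← h, zero_mul]
  have lhs : (G * ((M : ℝ) • (Fᵀ * Matrix.of fun i k' => if k' = yx i then (1 : ℝ) else 0))) j k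
      = (M : ℝ) * ∑ i, P i j * (if k = yx i then (1:ℝ) else 0) := by
    simp only [Matrix.mul_apply, Matrix.smul_apply, Matrix.transpose_apply, Matrix.of_apply,
      smul_eq_mul, hP]
    simp only [Finset.mul_sum, Finset.sum_mul]
    rw [Finset.sum_comm]
    exact Finset.sum_congr rfl fun i _ => Finset.sum_congr rfl fun l _ => by ring
  rw [lhs, key]
  by_cases hk : k = yz j <;> simp [hk, hM]
end
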